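/- arXiv:2204.00647 — 2 statements merged into one kernel-verified Lean document; each statement's English description precedes it below -/
import Mathlib

section
/- Let n ≥ 1, L > 0, μ ≤ 0, and let f : ℝⁿ → ℝ belong to F_{μ,L}. Assume the set X⋆ of global minimizers of f is nonempty, with minimum value f⋆, and that f has quadratic functional growth with constant μ_q > −μL/(L − μ) on a set X ⊆ ℝⁿ. Then for every x ∈ X and every x⋆ ∈ X⋆ with ‖x − x⋆‖ = d_{X⋆}(x), one has ⟨∇f(x), x − x⋆⟩ ≥ μ_g ‖x − x⋆‖², where μ_g = (μ_q/2)(1 − μ/L) + μ/2; that is, f has quadratic gradient growth with constant μ_g on X. -/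
open Set Filter Topology
open scoped RealInnerProductSpace

/-! At a minimizer `x⋆` the gradient vanishes, so `L`-smoothness bounds `f` above by
`f⋆ + L/2 ‖· - x⋆‖²`, while `μ`-weak convexity bounds it below by its quadratic model at `x`.
Comparing the two bounds at `y = x⋆ + (μq / L) • (x - x⋆)` and inserting quadratic growth at `x`
gives `1 - μq / L` times the claimed inequality; the borderline case `μq = L` follows by letting
the growth constant increase to `μq`. -/

theorem ConvexOn.add_fderiv_sub_le {E : Type*} [NormedAddCommGroup E] [NormedSpace ℝ E]
    {g : E → ℝ} {G : E →L[ℝ] ℝ} {u : E} (hg : ConvexOn ℝ univ g) (hG : HasFDerivAt g G u)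
    (v : E) : g u + G (v - u) ≤ g v := by
  let φ : ℝ → ℝ := fun t => g (u + t • (v - u))
  have hφ : HasDerivAt φ (G (v - u)) 0 := by
    have hline : HasDerivAt (fun t : ℝ => u + t • (v - u)) (v - u) 0 := by
      simpa using ((hasDerivAt_id (0 : ℝ)).smul_const (v - u)).const_add u
    exact (by simpa using hG : HasFDerivAt g G (u + (0 : ℝ) • (v - u))).comp_hasDerivAt 0 hline
  have hφconv : ConvexOn ℝ univ φ := by
    simpa [φ, Function.comp_def, AffineMap.lineMap_apply_module', add_comm] using
      hg.comp_affineMap (AffineMap.lineMap u v)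
  have hslope := hφconv.le_slope_of_hasDerivAt (mem_univ 0) (mem_univ 1) one_pos hφ
  simpa [slope_def_field, φ, le_sub_iff_add_le'] using hslope

section InnerProductSpace

variable {E : Type*} [NormedAddCommGroup E] [InnerProductSpace ℝ E] [CompleteSpace E]
  {f : E → ℝ} {f' : E → E}

theorem IsLocalMin.hasGradientAt_eq_zero {x g : E} (hmin : IsLocalMin f x)
    (hg : HasGradientAt f g x) : g = 0 :=
  (InnerProductSpace.toDual ℝ E).map_eq_zero_iff.mp (hmin.hasFDerivAt_eq_zero hg)

theorem quadratic_lower_bound_of_convexOn_sub {c : ℝ}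
    (hconv : ConvexOn ℝ univ (fun x => f x - c / 2 * ‖x‖ ^ 2))
    (hgrad : ∀ x, HasGradientAt f (f' x) x) (u v : E) :
    f u + ⟪f' u, v - u⟫ + c / 2 * ‖v - u‖ ^ 2 ≤ f v := by
  have h := hconv.add_fderiv_sub_le
    ((hgrad u).hasFDerivAt.sub ((hasStrictFDerivAt_norm_sq u).hasFDerivAt.const_mul (c / 2))) v
  simp only [sub_apply, smul_apply, InnerProductSpace.toDual_apply_apply, innerSL_apply_apply,
    smul_eq_mul, nsmul_eq_mul, inner_sub_right, real_inner_self_eq_norm_sq] at h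
  rw [norm_sub_sq_real, inner_sub_right, real_inner_comm u v]
  push_cast at h
  linarith

theorem quadratic_upper_bound_of_convexOn_sub {L : ℝ}
    (hconv : ConvexOn ℝ univ (fun x => L / 2 * ‖x‖ ^ 2 - f x))
    (hgrad : ∀ x, HasGradientAt f (f' x) x) (u v : E) :
    f v ≤ f u + ⟪f' u, v - u⟫ + L / 2 * ‖v - u‖ ^ 2 := by
  have h := hconv.add_fderiv_sub_le
    (((hasStrictFDerivAt_norm_sq u).hasFDerivAt.const_mul (L / 2)).sub (hgrad u).hasFDerivAt) v
  simp only [sub_apply, smul_apply, InnerProductSpace.toDual_apply_apply, innerSL_apply_apply,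
    smul_eq_mul, nsmul_eq_mul, inner_sub_right, real_inner_self_eq_norm_sq] at h
  rw [norm_sub_sq_real, inner_sub_right, real_inner_comm u v]
  push_cast at h
  linarith

end InnerProductSpace

section QuadraticBounds

variable {E : Type*} [NormedAddCommGroup E] [InnerProductSpace ℝ E]
  {f : E → ℝ} {g x xs : E} {μ L : ℝ}

theorem mul_norm_sq_le_inner_of_quadratic_bounds_of_lt {r : ℝ} (hL : 0 < L) (hrL : r < L)
    (hlow : ∀ y, f x + ⟪g, y - x⟫ + μ / 2 * ‖y - x‖ ^ 2 ≤ f y)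
    (hup : ∀ y, f y ≤ f xs + L / 2 * ‖y - xs‖ ^ 2)
    (hgrowth : r / 2 * ‖x - xs‖ ^ 2 ≤ f x - f xs) :
    (r / 2 * (1 - μ / L) + μ / 2) * ‖x - xs‖ ^ 2 ≤ ⟪g, x - xs⟫ := by
  set α := r / L
  have hα : 0 < 1 - α := sub_pos.2 ((div_lt_one hL).2 hrL)
  set y := xs + α • (x - xs)
  have hyx : y - x = (α - 1) • (x - xs) := by simp only [y, sub_smul, one_smul]; abel
  have hyxs : y - xs = α • (x - xs) := by simp only [y]; abel
  have hlow_y := hlow y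
  have hup_y := hup y
  rw [hyx, inner_smul_right, norm_smul, mul_pow, Real.norm_eq_abs, sq_abs] at hlow_y
  rw [hyxs, norm_smul, mul_pow, Real.norm_eq_abs, sq_abs] at hup_y
  have hfactor : (1 - α) * ((r / 2 * (1 - μ / L) + μ / 2) * ‖x - xs‖ ^ 2)
      = r / 2 * ‖x - xs‖ ^ 2 + μ / 2 * ((α - 1) ^ 2 * ‖x - xs‖ ^ 2)
        - L / 2 * (α ^ 2 * ‖x - xs‖ ^ 2) := by
    simp only [α]; field_simp; ring
  refine le_of_mul_le_mul_left ?_ hα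
  rw [hfactor]
  linarith

theorem mul_norm_sq_le_inner_of_quadratic_bounds {μq : ℝ} (hL : 0 < L)
    (hlow : ∀ y, f x + ⟪g, y - x⟫ + μ / 2 * ‖y - x‖ ^ 2 ≤ f y)
    (hup : ∀ y, f y ≤ f xs + L / 2 * ‖y - xs‖ ^ 2)
    (hgrowth : μq / 2 * ‖x - xs‖ ^ 2 ≤ f x - f xs) :
    (μq / 2 * (1 - μ / L) + μ / 2) * ‖x - xs‖ ^ 2 ≤ ⟪g, x - xs⟫ := by
  rcases eq_or_ne x xs with rfl | hne
  · simp
  have hd : 0 < ‖x - xs‖ ^ 2 := pow_pos (norm_pos_iff.2 (sub_ne_zero.2 hne)) 2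
  have hμqL : μq ≤ L := by
    have := hup x
    exact le_of_mul_le_mul_right (by linarith) (half_pos hd)
  have hcont : Continuous fun r : ℝ => (r / 2 * (1 - μ / L) + μ / 2) * ‖x - xs‖ ^ 2 := by
    fun_prop
  refine le_of_tendsto (x := 𝓝[<] μq) ((hcont.tendsto μq).mono_left nhdsWithin_le_nhds)
    (eventually_nhdsWithin_of_forall fun r (hr : r < μq) => ?_)
  refine mul_norm_sq_le_inner_of_quadratic_bounds_of_lt hL (hr.trans_le hμqL) hlow hup ?_
  exact le_trans (by gcongr) hgrowth

end QuadraticBounds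

theorem stmt_11_general (n : ℕ)
    (f : EuclideanSpace ℝ (Fin n) → ℝ)
    (f' : EuclideanSpace ℝ (Fin n) → EuclideanSpace ℝ (Fin n))
    (L μ : ℝ) (hL : 0 < L)
    (hgrad : ∀ x, HasGradientAt f (f' x) x)
    (hupper : ConvexOn ℝ univ (fun x => L / 2 * ‖x‖ ^ 2 - f x))
    (hlower : ConvexOn ℝ univ (fun x => f x - μ / 2 * ‖x‖ ^ 2))
    (xs : EuclideanSpace ℝ (Fin n))
    (X : Set (EuclideanSpace ℝ (Fin n)))
    (μq : ℝ)
    (hQF : ∀ x ∈ X,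
      μq / 2 * (Metric.infDist x {y | ∀ z, f y ≤ f z}) ^ 2 ≤ f x - f xs) :
    ∀ x ∈ X, ∀ xstar ∈ {y | ∀ z, f y ≤ f z},
      ‖x - xstar‖ = Metric.infDist x {y | ∀ z, f y ≤ f z} →
      (μq / 2 * (1 - μ / L) + μ / 2) * ‖x - xstar‖ ^ 2 ≤ ⟪f' x, x - xstar⟫ := by
  intro x hx xstar hxstar hdist
  have hgrad_xstar : f' xstar = 0 :=
    IsLocalMin.hasGradientAt_eq_zero (Eventually.of_forall hxstar) (hgrad xstar)
  refine mul_norm_sq_le_inner_of_quadratic_bounds hL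
    (quadratic_lower_bound_of_convexOn_sub hlower hgrad x) (fun y => ?_) ?_
  · simpa [hgrad_xstar] using quadratic_upper_bound_of_convexOn_sub hupper hgrad xstar y
  · rw [hdist]
    linarith [hQF x hx, hxstar xs]

theorem stmt_11 (n : ℕ) (hn : 1 ≤ n)
    (f : EuclideanSpace ℝ (Fin n) → ℝ)
    (f' : EuclideanSpace ℝ (Fin n) → EuclideanSpace ℝ (Fin n))
    (L μ : ℝ) (hL : 0 < L) (hμ : μ ≤ 0)
    (hgrad : ∀ x, HasGradientAt f (f' x) x)
    (hupper : ConvexOn ℝ univ (fun x => L / 2 * ‖x‖ ^ 2 - f x))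
    (hlower : ConvexOn ℝ univ (fun x => f x - μ / 2 * ‖x‖ ^ 2))
    (xs : EuclideanSpace ℝ (Fin n)) (hxs : ∀ z, f xs ≤ f z)
    (X : Set (EuclideanSpace ℝ (Fin n)))
    (μq : ℝ) (hμq : -μ * L / (L - μ) < μq)
    (hQF : ∀ x ∈ X,
      μq / 2 * (Metric.infDist x {y | ∀ z, f y ≤ f z}) ^ 2 ≤ f x - f xs) :
    ∀ x ∈ X, ∀ xstar ∈ {y | ∀ z, f y ≤ f z},
      ‖x - xstar‖ = Metric.infDist x {y | ∀ z, f y ≤ f z} →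
      (μq / 2 * (1 - μ / L) + μ / 2) * ‖x - xstar‖ ^ 2 ≤ ⟪f' x, x - xstar⟫ :=
  stmt_11_general n f f' L μ hL hgrad hupper hlower xs X μq hQF
end

section
/- Let n ≥ 1, L > 0, μ ≤ 0, and let f : ℝⁿ → ℝ belong to F_{μ,L}. Let x⋆ be the unique global minimizer of f, with f⋆ = f(x⋆), and let X ⊆ ℝⁿ. Suppose ⟨∇f(x), x − x⋆⟩ ≥ μ_g ‖x − x⋆‖² for all x ∈ X, for some μ_g > 0 (quadratic gradient growth). Then for every ℓ > max(L/2, μ_g) and every x ∈ X, one has f(x) + (ℓ/μ_g)⟨∇f(x), x⋆ − x⟩ + (ℓ − L/2)‖x⋆ − x‖² ≤ f⋆; that is, f is (γ, μ_s)-quasar-convex on X with respect to x⋆ with γ = μ_g/ℓ and μ_s = 2ℓ − L. -/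
open Set
open scoped RealInnerProductSpace

/-!
Convexity of `L/2 ‖·‖² - f` gives the descent inequality
`f x ≤ f x⋆ + ⟪∇f x⋆, x - x⋆⟫ + L/2 ‖x - x⋆‖²`, and `∇f x⋆ = 0` at the minimizer. Quadratic
gradient growth bounds `(ℓ/μg) ⟪∇f x, x⋆ - x⟫` by `-ℓ ‖x - x⋆‖²`; adding the two estimates, the
quadratic terms `L/2 - ℓ + (ℓ - L/2)` cancel.
-/

theorem ConvexOn.add_fderiv_sub_le_s16 {E : Type*} [NormedAddCommGroup E] [NormedSpace ℝ E]
    {s : Set E} {g : E → ℝ} {g' : E →L[ℝ] ℝ} {x y : E} (hg : ConvexOn ℝ s g)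
    (hx : x ∈ s) (hy : y ∈ s) (hgx : HasFDerivAt g g' x) :
    g x + g' (y - x) ≤ g y := by
  let φ : ℝ → ℝ := g ∘ AffineMap.lineMap x y
  have hφ : ConvexOn ℝ (Icc 0 1) φ := by
    refine (hg.comp_affineMap (AffineMap.lineMap x y)).subset (fun t ht => ?_) (convex_Icc 0 1)
    exact hg.1.lineMap_mem hx hy ht
  have hφ' : HasDerivAt φ (g' (y - x)) 0 := by
    rw [← AffineMap.lineMap_apply_zero (k := ℝ) x y] at hgx
    exact hgx.comp_hasDerivAt 0 AffineMap.hasDerivAt_lineMap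
  have hslope := hφ.le_slope_of_hasDerivAt (left_mem_Icc.2 zero_le_one)
    (right_mem_Icc.2 zero_le_one) zero_lt_one hφ'
  simp only [φ, slope_def_field, Function.comp_apply, AffineMap.lineMap_apply_zero,
    AffineMap.lineMap_apply_one, sub_zero, div_one] at hslope
  linarith

theorem IsLocalMin.hasGradientAt_eq_zero_s16 {F : Type*} [NormedAddCommGroup F]
    [InnerProductSpace ℝ F] [CompleteSpace F] {f : F → ℝ} {f' a : F} (h : IsLocalMin f a)
    (hf : HasGradientAt f f' a) : f' = 0 :=
  (InnerProductSpace.toDual ℝ F).map_eq_zero_iff.1 (h.hasFDerivAt_eq_zero hf.hasFDerivAt)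

theorem HasGradientAt.le_add_inner_add_sq_of_convexOn {F : Type*} [NormedAddCommGroup F]
    [InnerProductSpace ℝ F] [CompleteSpace F] {f : F → ℝ} {f' x : F} {L : ℝ}
    (hf : HasGradientAt f f' x) (hc : ConvexOn ℝ univ (fun z => L / 2 * ‖z‖ ^ 2 - f z))
    (y : F) : f y ≤ f x + ⟪f', y - x⟫ + L / 2 * ‖y - x‖ ^ 2 := by
  have hg := ((hasStrictFDerivAt_norm_sq x).hasFDerivAt.const_mul (L / 2)).sub hf.hasFDerivAt
  have hfirst_order := hc.add_fderiv_sub_le_s16 (mem_univ x) (mem_univ y) hg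
  simp only [sub_apply, smul_apply, InnerProductSpace.toDual_apply_apply, innerSL_apply_apply,
    smul_eq_mul, nsmul_eq_mul, Nat.cast_ofNat, inner_sub_right,
    real_inner_self_eq_norm_sq] at hfirst_order
  rw [norm_sub_sq_real, inner_sub_right, real_inner_comm x y]
  linarith

theorem stmt_16_general (n : ℕ)
    (f : EuclideanSpace ℝ (Fin n) → ℝ)
    (f' : EuclideanSpace ℝ (Fin n) → EuclideanSpace ℝ (Fin n))
    (L : ℝ)
    (hgrad : ∀ x, HasGradientAt f (f' x) x)
    (hupper : ConvexOn ℝ univ (fun x => L / 2 * ‖x‖ ^ 2 - f x))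
    (xstar : EuclideanSpace ℝ (Fin n)) (hmin : ∀ z, f xstar ≤ f z)
    (X : Set (EuclideanSpace ℝ (Fin n)))
    (μg : ℝ) (hμg : 0 < μg)
    (hQG : ∀ x ∈ X, μg * ‖x - xstar‖ ^ 2 ≤ ⟪f' x, x - xstar⟫) :
    ∀ ℓ : ℝ, max (L / 2) μg < ℓ → ∀ x ∈ X,
      f x + (ℓ / μg) * ⟪f' x, xstar - x⟫ + (ℓ - L / 2) * ‖xstar - x‖ ^ 2 ≤
        f xstar := by
  intro ℓ hℓ x hx
  have hℓ_pos : 0 < ℓ := hμg.trans ((le_max_right _ _).trans_lt hℓ)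
  have hcoeff : 0 ≤ ℓ / μg := div_nonneg hℓ_pos.le hμg.le
  have hgrad_star : f' xstar = 0 :=
    (show IsLocalMin f xstar from .of_forall hmin).hasGradientAt_eq_zero_s16 (hgrad xstar)
  have hdescent : f x ≤ f xstar + L / 2 * ‖x - xstar‖ ^ 2 := by
    simpa [hgrad_star] using (hgrad xstar).le_add_inner_add_sq_of_convexOn hupper x
  have hgrowth := mul_le_mul_of_nonneg_left (hQG x hx) hcoeff
  have hcancel : ℓ / μg * (μg * ‖x - xstar‖ ^ 2) = ℓ * ‖x - xstar‖ ^ 2 := by field_simp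
  rw [norm_sub_rev, ← neg_sub x, inner_neg_right]
  linarith

theorem stmt_16 (n : ℕ) (hn : 1 ≤ n)
    (f : EuclideanSpace ℝ (Fin n) → ℝ)
    (f' : EuclideanSpace ℝ (Fin n) → EuclideanSpace ℝ (Fin n))
    (L μ : ℝ) (hL : 0 < L) (hμ : μ ≤ 0)
    (hgrad : ∀ x, HasGradientAt f (f' x) x)
    (hupper : ConvexOn ℝ univ (fun x => L / 2 * ‖x‖ ^ 2 - f x))
    (hlower : ConvexOn ℝ univ (fun x => f x - μ / 2 * ‖x‖ ^ 2))
    (xstar : EuclideanSpace ℝ (Fin n)) (hmin : ∀ z, f xstar ≤ f z)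
    (huniq : ∀ y, (∀ z, f y ≤ f z) → y = xstar)
    (X : Set (EuclideanSpace ℝ (Fin n)))
    (μg : ℝ) (hμg : 0 < μg)
    (hQG : ∀ x ∈ X, μg * ‖x - xstar‖ ^ 2 ≤ ⟪f' x, x - xstar⟫) :
    ∀ ℓ : ℝ, max (L / 2) μg < ℓ → ∀ x ∈ X,
      f x + (ℓ / μg) * ⟪f' x, xstar - x⟫ + (ℓ - L / 2) * ‖xstar - x‖ ^ 2 ≤
        f xstar :=
  stmt_16_general n f f' L hgrad hupper xstar hmin X μg hμg hQG
end
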